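/- The element e = (1/2)(1 + γ⁰) is a primitive idempotent of the Clifford algebra Cl₁,₃: e² = e, e ≠ 0, and e cannot be decomposed as e = p + q with p, q nonzero idempotents satisfying p·q = q·p = 0. -/

import Mathlib

noncomputable section

/-- The weights of the quadratic form Q₁,₃ (index 0 timelike with weight +1,
indices 1,2,3 spacelike with weight −1). -/
def w13 : Fin 4 → ℝ := fun μ => if μ = 0 then 1 else -1

/-- The quadratic form Q₁,₃(x) = (x⁰)² − (x¹)² − (x²)² − (x³)² on ℝ⁴. -/
def Q13 : QuadraticForm ℝ (Fin 4 → ℝ) := QuadraticMap.weightedSumSquares ℝ w13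

/-- γ⁰ = ι(e₀), the image of the timelike standard basis vector, so (γ⁰)² = 1. -/
def γ0 : CliffordAlgebra Q13 := CliffordAlgebra.ι Q13 (Pi.single 0 1)

/-- The idempotent e = (1/2)(1 + γ⁰). -/
def eIdem : CliffordAlgebra Q13 := (1 / 2 : ℝ) • (1 + γ0)

abbrev Cl := CliffordAlgebra Q13
abbrev Mq := Matrix (Fin 2) (Fin 2) (Quaternion ℝ)

def qq (a b c d : ℝ) : Quaternion ℝ := ⟨a, b, c, d⟩

@[simp] lemma qq_re (a b c d : ℝ) : (qq a b c d).re = a := rfl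
@[simp] lemma qq_imI (a b c d : ℝ) : (qq a b c d).imI = b := rfl
@[simp] lemma qq_imJ (a b c d : ℝ) : (qq a b c d).imJ = c := rfl
@[simp] lemma qq_imK (a b c d : ℝ) : (qq a b c d).imK = d := rfl
@[simp] lemma q0_re : (0 : Quaternion ℝ).re = 0 := rfl
@[simp] lemma q0_imI : (0 : Quaternion ℝ).imI = 0 := rfl
@[simp] lemma q0_imJ : (0 : Quaternion ℝ).imJ = 0 := rfl
@[simp] lemma q0_imK : (0 : Quaternion ℝ).imK = 0 := rfl
@[simp] lemma q1_re : (1 : Quaternion ℝ).re = 1 := rfl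
@[simp] lemma q1_imI : (1 : Quaternion ℝ).imI = 0 := rfl
@[simp] lemma q1_imJ : (1 : Quaternion ℝ).imJ = 0 := rfl
@[simp] lemma q1_imK : (1 : Quaternion ℝ).imK = 0 := rfl

def g (μ : Fin 4) : Cl := CliffordAlgebra.ι Q13 (Pi.single μ 1)

lemma eIdem_ex : eIdem = (1/2 : ℝ) • (1 : Cl) + (1/2 : ℝ) • g 0 := by
  rw [eIdem, smul_add]
  rfl

lemma Q13_apply (v : Fin 4 → ℝ) : Q13 v = v 0 * v 0 - v 1 * v 1 - v 2 * v 2 - v 3 * v 3 := by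
  simp [Q13, QuadraticMap.weightedSumSquares_apply, Fin.sum_univ_four, w13, smul_eq_mul]
  ring

lemma Q13_single (μ : Fin 4) : Q13 (Pi.single μ 1) = w13 μ := by
  fin_cases μ <;> simp [Q13_apply, w13]

lemma polar_single (i j : Fin 4) (h : i ≠ j) :
    QuadraticMap.polar Q13 (Pi.single i 1) (Pi.single j 1) = 0 := by
  rw [QuadraticMap.polar]
  fin_cases i <;> fin_cases j <;> simp_all [Q13_apply, Pi.single_apply]

lemma g_swap (i j : Fin 4) (h : i ≠ j) : g j * g i = -(g i * g j) := by
  have := CliffordAlgebra.ι_mul_ι_add_swap (Q := Q13) (Pi.single i 1) (Pi.single j 1)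
  rw [polar_single i j h] at this
  simp only [map_zero] at this
  rw [g, g, eq_neg_iff_add_eq_zero, add_comm]
  exact this

@[simp] lemma gsq0 : g 0 * g 0 = (1 : Cl) := by
  rw [g, CliffordAlgebra.ι_sq_scalar, Q13_single]; simp [w13]

@[simp] lemma gsq1 : g 1 * g 1 = (-1 : Cl) := by
  rw [g, CliffordAlgebra.ι_sq_scalar, Q13_single]; simp [w13]

@[simp] lemma gsq2 : g 2 * g 2 = (-1 : Cl) := by
  rw [g, CliffordAlgebra.ι_sq_scalar, Q13_single]; simp [w13]

@[simp] lemma gsq3 : g 3 * g 3 = (-1 : Cl) := by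
  rw [g, CliffordAlgebra.ι_sq_scalar, Q13_single]; simp [w13]

@[simp] lemma gsq0' (x : Cl) : g 0 * (g 0 * x) = x := by
  rw [← mul_assoc, gsq0, one_mul]

@[simp] lemma gsq1' (x : Cl) : g 1 * (g 1 * x) = -x := by
  rw [← mul_assoc, gsq1, neg_one_mul]

@[simp] lemma gsq2' (x : Cl) : g 2 * (g 2 * x) = -x := by
  rw [← mul_assoc, gsq2, neg_one_mul]

@[simp] lemma gsq3' (x : Cl) : g 3 * (g 3 * x) = -x := by
  rw [← mul_assoc, gsq3, neg_one_mul]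

@[simp] lemma gsw10 : g 1 * g 0 = -(g 0 * g 1) := g_swap 0 1 (by decide)

@[simp] lemma gsw10' (x : Cl) : g 1 * (g 0 * x) = -(g 0 * (g 1 * x)) := by
  rw [← mul_assoc, gsw10, neg_mul, mul_assoc]

@[simp] lemma gsw20 : g 2 * g 0 = -(g 0 * g 2) := g_swap 0 2 (by decide)

@[simp] lemma gsw20' (x : Cl) : g 2 * (g 0 * x) = -(g 0 * (g 2 * x)) := by
  rw [← mul_assoc, gsw20, neg_mul, mul_assoc]

@[simp] lemma gsw21 : g 2 * g 1 = -(g 1 * g 2) := g_swap 1 2 (by decide)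

@[simp] lemma gsw21' (x : Cl) : g 2 * (g 1 * x) = -(g 1 * (g 2 * x)) := by
  rw [← mul_assoc, gsw21, neg_mul, mul_assoc]

@[simp] lemma gsw30 : g 3 * g 0 = -(g 0 * g 3) := g_swap 0 3 (by decide)

@[simp] lemma gsw30' (x : Cl) : g 3 * (g 0 * x) = -(g 0 * (g 3 * x)) := by
  rw [← mul_assoc, gsw30, neg_mul, mul_assoc]

@[simp] lemma gsw31 : g 3 * g 1 = -(g 1 * g 3) := g_swap 1 3 (by decide)

@[simp] lemma gsw31' (x : Cl) : g 3 * (g 1 * x) = -(g 1 * (g 3 * x)) := by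
  rw [← mul_assoc, gsw31, neg_mul, mul_assoc]

@[simp] lemma gsw32 : g 3 * g 2 = -(g 2 * g 3) := g_swap 2 3 (by decide)

@[simp] lemma gsw32' (x : Cl) : g 3 * (g 2 * x) = -(g 2 * (g 3 * x)) := by
  rw [← mul_assoc, gsw32, neg_mul, mul_assoc]


def Bset : Set Cl := {(1 : Cl), g 0, g 1, g 2, g 3, g 0 * g 1, g 0 * g 2, g 0 * g 3, g 1 * g 2, g 1 * g 3, g 2 * g 3, g 0 * g 1 * g 2, g 0 * g 1 * g 3, g 0 * g 2 * g 3, g 1 * g 2 * g 3, g 0 * g 1 * g 2 * g 3}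

def W : Submodule ℝ Cl := Submodule.span ℝ Bset

lemma Bmem0 : ((1 : Cl)) ∈ Bset := Set.mem_insert _ _
lemma Bmem1 : (g 0) ∈ Bset := Set.mem_insert_of_mem _ (Set.mem_insert _ _)
lemma Bmem2 : (g 1) ∈ Bset := Set.mem_insert_of_mem _ (Set.mem_insert_of_mem _ (Set.mem_insert _ _))
lemma Bmem3 : (g 2) ∈ Bset := Set.mem_insert_of_mem _ (Set.mem_insert_of_mem _ (Set.mem_insert_of_mem _ (Set.mem_insert _ _)))
lemma Bmem4 : (g 3) ∈ Bset := Set.mem_insert_of_mem _ (Set.mem_insert_of_mem _ (Set.mem_insert_of_mem _ (Set.mem_insert_of_mem _ (Set.mem_insert _ _))))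
lemma Bmem5 : (g 0 * g 1) ∈ Bset := Set.mem_insert_of_mem _ (Set.mem_insert_of_mem _ (Set.mem_insert_of_mem _ (Set.mem_insert_of_mem _ (Set.mem_insert_of_mem _ (Set.mem_insert _ _)))))
lemma Bmem6 : (g 0 * g 2) ∈ Bset := Set.mem_insert_of_mem _ (Set.mem_insert_of_mem _ (Set.mem_insert_of_mem _ (Set.mem_insert_of_mem _ (Set.mem_insert_of_mem _ (Set.mem_insert_of_mem _ (Set.mem_insert _ _))))))
lemma Bmem7 : (g 0 * g 3) ∈ Bset := Set.mem_insert_of_mem _ (Set.mem_insert_of_mem _ (Set.mem_insert_of_mem _ (Set.mem_insert_of_mem _ (Set.mem_insert_of_mem _ (Set.mem_insert_of_mem _ (Set.mem_insert_of_mem _ (Set.mem_insert _ _)))))))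
lemma Bmem8 : (g 1 * g 2) ∈ Bset := Set.mem_insert_of_mem _ (Set.mem_insert_of_mem _ (Set.mem_insert_of_mem _ (Set.mem_insert_of_mem _ (Set.mem_insert_of_mem _ (Set.mem_insert_of_mem _ (Set.mem_insert_of_mem _ (Set.mem_insert_of_mem _ (Set.mem_insert _ _))))))))
lemma Bmem9 : (g 1 * g 3) ∈ Bset := Set.mem_insert_of_mem _ (Set.mem_insert_of_mem _ (Set.mem_insert_of_mem _ (Set.mem_insert_of_mem _ (Set.mem_insert_of_mem _ (Set.mem_insert_of_mem _ (Set.mem_insert_of_mem _ (Set.mem_insert_of_mem _ (Set.mem_insert_of_mem _ (Set.mem_insert _ _)))))))))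
lemma Bmem10 : (g 2 * g 3) ∈ Bset := Set.mem_insert_of_mem _ (Set.mem_insert_of_mem _ (Set.mem_insert_of_mem _ (Set.mem_insert_of_mem _ (Set.mem_insert_of_mem _ (Set.mem_insert_of_mem _ (Set.mem_insert_of_mem _ (Set.mem_insert_of_mem _ (Set.mem_insert_of_mem _ (Set.mem_insert_of_mem _ (Set.mem_insert _ _))))))))))
lemma Bmem11 : (g 0 * g 1 * g 2) ∈ Bset := Set.mem_insert_of_mem _ (Set.mem_insert_of_mem _ (Set.mem_insert_of_mem _ (Set.mem_insert_of_mem _ (Set.mem_insert_of_mem _ (Set.mem_insert_of_mem _ (Set.mem_insert_of_mem _ (Set.mem_insert_of_mem _ (Set.mem_insert_of_mem _ (Set.mem_insert_of_mem _ (Set.mem_insert_of_mem _ (Set.mem_insert _ _)))))))))))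
lemma Bmem12 : (g 0 * g 1 * g 3) ∈ Bset := Set.mem_insert_of_mem _ (Set.mem_insert_of_mem _ (Set.mem_insert_of_mem _ (Set.mem_insert_of_mem _ (Set.mem_insert_of_mem _ (Set.mem_insert_of_mem _ (Set.mem_insert_of_mem _ (Set.mem_insert_of_mem _ (Set.mem_insert_of_mem _ (Set.mem_insert_of_mem _ (Set.mem_insert_of_mem _ (Set.mem_insert_of_mem _ (Set.mem_insert _ _))))))))))))
lemma Bmem13 : (g 0 * g 2 * g 3) ∈ Bset := Set.mem_insert_of_mem _ (Set.mem_insert_of_mem _ (Set.mem_insert_of_mem _ (Set.mem_insert_of_mem _ (Set.mem_insert_of_mem _ (Set.mem_insert_of_mem _ (Set.mem_insert_of_mem _ (Set.mem_insert_of_mem _ (Set.mem_insert_of_mem _ (Set.mem_insert_of_mem _ (Set.mem_insert_of_mem _ (Set.mem_insert_of_mem _ (Set.mem_insert_of_mem _ (Set.mem_insert _ _)))))))))))))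
lemma Bmem14 : (g 1 * g 2 * g 3) ∈ Bset := Set.mem_insert_of_mem _ (Set.mem_insert_of_mem _ (Set.mem_insert_of_mem _ (Set.mem_insert_of_mem _ (Set.mem_insert_of_mem _ (Set.mem_insert_of_mem _ (Set.mem_insert_of_mem _ (Set.mem_insert_of_mem _ (Set.mem_insert_of_mem _ (Set.mem_insert_of_mem _ (Set.mem_insert_of_mem _ (Set.mem_insert_of_mem _ (Set.mem_insert_of_mem _ (Set.mem_insert_of_mem _ (Set.mem_insert _ _))))))))))))))
lemma Bmem15 : (g 0 * g 1 * g 2 * g 3) ∈ Bset := Set.mem_insert_of_mem _ (Set.mem_insert_of_mem _ (Set.mem_insert_of_mem _ (Set.mem_insert_of_mem _ (Set.mem_insert_of_mem _ (Set.mem_insert_of_mem _ (Set.mem_insert_of_mem _ (Set.mem_insert_of_mem _ (Set.mem_insert_of_mem _ (Set.mem_insert_of_mem _ (Set.mem_insert_of_mem _ (Set.mem_insert_of_mem _ (Set.mem_insert_of_mem _ (Set.mem_insert_of_mem _ (Set.mem_insert_of_mem _ (Set.mem_singleton _)))))))))))))))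

lemma gmulW0 (x : Cl) (hx : x ∈ Bset) : g 0 * x ∈ W := by
  simp only [Bset, Set.mem_insert_iff, Set.mem_singleton_iff] at hx
  rcases hx with rfl|rfl|rfl|rfl|rfl|rfl|rfl|rfl|rfl|rfl|rfl|rfl|rfl|rfl|rfl|rfl
  · have h : g 0 * ((1 : Cl)) = (g 0) := by simp [mul_assoc]
    rw [h]; exact Submodule.subset_span Bmem1
  · have h : g 0 * (g 0) = ((1 : Cl)) := by simp [mul_assoc]
    rw [h]; exact Submodule.subset_span Bmem0
  · have h : g 0 * (g 1) = (g 0 * g 1) := by simp [mul_assoc]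
    rw [h]; exact Submodule.subset_span Bmem5
  · have h : g 0 * (g 2) = (g 0 * g 2) := by simp [mul_assoc]
    rw [h]; exact Submodule.subset_span Bmem6
  · have h : g 0 * (g 3) = (g 0 * g 3) := by simp [mul_assoc]
    rw [h]; exact Submodule.subset_span Bmem7
  · have h : g 0 * (g 0 * g 1) = (g 1) := by simp [mul_assoc]
    rw [h]; exact Submodule.subset_span Bmem2
  · have h : g 0 * (g 0 * g 2) = (g 2) := by simp [mul_assoc]
    rw [h]; exact Submodule.subset_span Bmem3
  · have h : g 0 * (g 0 * g 3) = (g 3) := by simp [mul_assoc]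
    rw [h]; exact Submodule.subset_span Bmem4
  · have h : g 0 * (g 1 * g 2) = (g 0 * g 1 * g 2) := by simp [mul_assoc]
    rw [h]; exact Submodule.subset_span Bmem11
  · have h : g 0 * (g 1 * g 3) = (g 0 * g 1 * g 3) := by simp [mul_assoc]
    rw [h]; exact Submodule.subset_span Bmem12
  · have h : g 0 * (g 2 * g 3) = (g 0 * g 2 * g 3) := by simp [mul_assoc]
    rw [h]; exact Submodule.subset_span Bmem13
  · have h : g 0 * (g 0 * g 1 * g 2) = (g 1 * g 2) := by simp [mul_assoc]
    rw [h]; exact Submodule.subset_span Bmem8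
  · have h : g 0 * (g 0 * g 1 * g 3) = (g 1 * g 3) := by simp [mul_assoc]
    rw [h]; exact Submodule.subset_span Bmem9
  · have h : g 0 * (g 0 * g 2 * g 3) = (g 2 * g 3) := by simp [mul_assoc]
    rw [h]; exact Submodule.subset_span Bmem10
  · have h : g 0 * (g 1 * g 2 * g 3) = (g 0 * g 1 * g 2 * g 3) := by simp [mul_assoc]
    rw [h]; exact Submodule.subset_span Bmem15
  · have h : g 0 * (g 0 * g 1 * g 2 * g 3) = (g 1 * g 2 * g 3) := by simp [mul_assoc]
    rw [h]; exact Submodule.subset_span Bmem14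

lemma gmulW1 (x : Cl) (hx : x ∈ Bset) : g 1 * x ∈ W := by
  simp only [Bset, Set.mem_insert_iff, Set.mem_singleton_iff] at hx
  rcases hx with rfl|rfl|rfl|rfl|rfl|rfl|rfl|rfl|rfl|rfl|rfl|rfl|rfl|rfl|rfl|rfl
  · have h : g 1 * ((1 : Cl)) = (g 1) := by simp [mul_assoc]
    rw [h]; exact Submodule.subset_span Bmem2
  · have h : g 1 * (g 0) = -(g 0 * g 1) := by simp [mul_assoc]
    rw [h]; exact neg_mem (Submodule.subset_span Bmem5)
  · have h : g 1 * (g 1) = -((1 : Cl)) := by simp [mul_assoc]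
    rw [h]; exact neg_mem (Submodule.subset_span Bmem0)
  · have h : g 1 * (g 2) = (g 1 * g 2) := by simp [mul_assoc]
    rw [h]; exact Submodule.subset_span Bmem8
  · have h : g 1 * (g 3) = (g 1 * g 3) := by simp [mul_assoc]
    rw [h]; exact Submodule.subset_span Bmem9
  · have h : g 1 * (g 0 * g 1) = (g 0) := by simp [mul_assoc]
    rw [h]; exact Submodule.subset_span Bmem1
  · have h : g 1 * (g 0 * g 2) = -(g 0 * g 1 * g 2) := by simp [mul_assoc]
    rw [h]; exact neg_mem (Submodule.subset_span Bmem11)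
  · have h : g 1 * (g 0 * g 3) = -(g 0 * g 1 * g 3) := by simp [mul_assoc]
    rw [h]; exact neg_mem (Submodule.subset_span Bmem12)
  · have h : g 1 * (g 1 * g 2) = -(g 2) := by simp [mul_assoc]
    rw [h]; exact neg_mem (Submodule.subset_span Bmem3)
  · have h : g 1 * (g 1 * g 3) = -(g 3) := by simp [mul_assoc]
    rw [h]; exact neg_mem (Submodule.subset_span Bmem4)
  · have h : g 1 * (g 2 * g 3) = (g 1 * g 2 * g 3) := by simp [mul_assoc]
    rw [h]; exact Submodule.subset_span Bmem14
  · have h : g 1 * (g 0 * g 1 * g 2) = (g 0 * g 2) := by simp [mul_assoc]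
    rw [h]; exact Submodule.subset_span Bmem6
  · have h : g 1 * (g 0 * g 1 * g 3) = (g 0 * g 3) := by simp [mul_assoc]
    rw [h]; exact Submodule.subset_span Bmem7
  · have h : g 1 * (g 0 * g 2 * g 3) = -(g 0 * g 1 * g 2 * g 3) := by simp [mul_assoc]
    rw [h]; exact neg_mem (Submodule.subset_span Bmem15)
  · have h : g 1 * (g 1 * g 2 * g 3) = -(g 2 * g 3) := by simp [mul_assoc]
    rw [h]; exact neg_mem (Submodule.subset_span Bmem10)
  · have h : g 1 * (g 0 * g 1 * g 2 * g 3) = (g 0 * g 2 * g 3) := by simp [mul_assoc]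
    rw [h]; exact Submodule.subset_span Bmem13

lemma gmulW2 (x : Cl) (hx : x ∈ Bset) : g 2 * x ∈ W := by
  simp only [Bset, Set.mem_insert_iff, Set.mem_singleton_iff] at hx
  rcases hx with rfl|rfl|rfl|rfl|rfl|rfl|rfl|rfl|rfl|rfl|rfl|rfl|rfl|rfl|rfl|rfl
  · have h : g 2 * ((1 : Cl)) = (g 2) := by simp [mul_assoc]
    rw [h]; exact Submodule.subset_span Bmem3
  · have h : g 2 * (g 0) = -(g 0 * g 2) := by simp [mul_assoc]
    rw [h]; exact neg_mem (Submodule.subset_span Bmem6)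
  · have h : g 2 * (g 1) = -(g 1 * g 2) := by simp [mul_assoc]
    rw [h]; exact neg_mem (Submodule.subset_span Bmem8)
  · have h : g 2 * (g 2) = -((1 : Cl)) := by simp [mul_assoc]
    rw [h]; exact neg_mem (Submodule.subset_span Bmem0)
  · have h : g 2 * (g 3) = (g 2 * g 3) := by simp [mul_assoc]
    rw [h]; exact Submodule.subset_span Bmem10
  · have h : g 2 * (g 0 * g 1) = (g 0 * g 1 * g 2) := by simp [mul_assoc]
    rw [h]; exact Submodule.subset_span Bmem11
  · have h : g 2 * (g 0 * g 2) = (g 0) := by simp [mul_assoc]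
    rw [h]; exact Submodule.subset_span Bmem1
  · have h : g 2 * (g 0 * g 3) = -(g 0 * g 2 * g 3) := by simp [mul_assoc]
    rw [h]; exact neg_mem (Submodule.subset_span Bmem13)
  · have h : g 2 * (g 1 * g 2) = (g 1) := by simp [mul_assoc]
    rw [h]; exact Submodule.subset_span Bmem2
  · have h : g 2 * (g 1 * g 3) = -(g 1 * g 2 * g 3) := by simp [mul_assoc]
    rw [h]; exact neg_mem (Submodule.subset_span Bmem14)
  · have h : g 2 * (g 2 * g 3) = -(g 3) := by simp [mul_assoc]
    rw [h]; exact neg_mem (Submodule.subset_span Bmem4)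
  · have h : g 2 * (g 0 * g 1 * g 2) = -(g 0 * g 1) := by simp [mul_assoc]
    rw [h]; exact neg_mem (Submodule.subset_span Bmem5)
  · have h : g 2 * (g 0 * g 1 * g 3) = (g 0 * g 1 * g 2 * g 3) := by simp [mul_assoc]
    rw [h]; exact Submodule.subset_span Bmem15
  · have h : g 2 * (g 0 * g 2 * g 3) = (g 0 * g 3) := by simp [mul_assoc]
    rw [h]; exact Submodule.subset_span Bmem7
  · have h : g 2 * (g 1 * g 2 * g 3) = (g 1 * g 3) := by simp [mul_assoc]
    rw [h]; exact Submodule.subset_span Bmem9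
  · have h : g 2 * (g 0 * g 1 * g 2 * g 3) = -(g 0 * g 1 * g 3) := by simp [mul_assoc]
    rw [h]; exact neg_mem (Submodule.subset_span Bmem12)

lemma gmulW3 (x : Cl) (hx : x ∈ Bset) : g 3 * x ∈ W := by
  simp only [Bset, Set.mem_insert_iff, Set.mem_singleton_iff] at hx
  rcases hx with rfl|rfl|rfl|rfl|rfl|rfl|rfl|rfl|rfl|rfl|rfl|rfl|rfl|rfl|rfl|rfl
  · have h : g 3 * ((1 : Cl)) = (g 3) := by simp [mul_assoc]
    rw [h]; exact Submodule.subset_span Bmem4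
  · have h : g 3 * (g 0) = -(g 0 * g 3) := by simp [mul_assoc]
    rw [h]; exact neg_mem (Submodule.subset_span Bmem7)
  · have h : g 3 * (g 1) = -(g 1 * g 3) := by simp [mul_assoc]
    rw [h]; exact neg_mem (Submodule.subset_span Bmem9)
  · have h : g 3 * (g 2) = -(g 2 * g 3) := by simp [mul_assoc]
    rw [h]; exact neg_mem (Submodule.subset_span Bmem10)
  · have h : g 3 * (g 3) = -((1 : Cl)) := by simp [mul_assoc]
    rw [h]; exact neg_mem (Submodule.subset_span Bmem0)
  · have h : g 3 * (g 0 * g 1) = (g 0 * g 1 * g 3) := by simp [mul_assoc]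
    rw [h]; exact Submodule.subset_span Bmem12
  · have h : g 3 * (g 0 * g 2) = (g 0 * g 2 * g 3) := by simp [mul_assoc]
    rw [h]; exact Submodule.subset_span Bmem13
  · have h : g 3 * (g 0 * g 3) = (g 0) := by simp [mul_assoc]
    rw [h]; exact Submodule.subset_span Bmem1
  · have h : g 3 * (g 1 * g 2) = (g 1 * g 2 * g 3) := by simp [mul_assoc]
    rw [h]; exact Submodule.subset_span Bmem14
  · have h : g 3 * (g 1 * g 3) = (g 1) := by simp [mul_assoc]
    rw [h]; exact Submodule.subset_span Bmem2
  · have h : g 3 * (g 2 * g 3) = (g 2) := by simp [mul_assoc]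
    rw [h]; exact Submodule.subset_span Bmem3
  · have h : g 3 * (g 0 * g 1 * g 2) = -(g 0 * g 1 * g 2 * g 3) := by simp [mul_assoc]
    rw [h]; exact neg_mem (Submodule.subset_span Bmem15)
  · have h : g 3 * (g 0 * g 1 * g 3) = -(g 0 * g 1) := by simp [mul_assoc]
    rw [h]; exact neg_mem (Submodule.subset_span Bmem5)
  · have h : g 3 * (g 0 * g 2 * g 3) = -(g 0 * g 2) := by simp [mul_assoc]
    rw [h]; exact neg_mem (Submodule.subset_span Bmem6)
  · have h : g 3 * (g 1 * g 2 * g 3) = -(g 1 * g 2) := by simp [mul_assoc]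
    rw [h]; exact neg_mem (Submodule.subset_span Bmem8)
  · have h : g 3 * (g 0 * g 1 * g 2 * g 3) = (g 0 * g 1 * g 2) := by simp [mul_assoc]
    rw [h]; exact Submodule.subset_span Bmem11


lemma gmulW (μ : Fin 4) (x : Cl) (hx : x ∈ W) : g μ * x ∈ W := by
  induction hx using Submodule.span_induction with
  | mem y hy =>
      fin_cases μ
      · exact gmulW0 y hy
      · exact gmulW1 y hy
      · exact gmulW2 y hy
      · exact gmulW3 y hy
  | zero => simpa using W.zero_mem
  | add a b ha hb iha ihb => simpa [mul_add] using add_mem iha ihb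
  | smul r a ha iha => simpa [mul_smul_comm] using W.smul_mem r iha

lemma ι_decomp (v : Fin 4 → ℝ) :
    CliffordAlgebra.ι Q13 v = v 0 • g 0 + v 1 • g 1 + v 2 • g 2 + v 3 • g 3 := by
  have hv : v = v 0 • (Pi.single 0 1 : Fin 4 → ℝ) + v 1 • (Pi.single 1 1 : Fin 4 → ℝ)
      + v 2 • (Pi.single 2 1 : Fin 4 → ℝ) + v 3 • (Pi.single 3 1 : Fin 4 → ℝ) := by
    ext i; fin_cases i <;> simp [Pi.single_apply]
  conv_lhs => rw [hv]
  simp only [map_add, map_smul, g]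

lemma leftMulW (x : Cl) : ∀ y ∈ W, x * y ∈ W := by
  induction x using CliffordAlgebra.induction with
  | algebraMap r =>
      intro y hy
      rw [Algebra.algebraMap_eq_smul_one, smul_mul_assoc, one_mul]
      exact W.smul_mem r hy
  | ι v =>
      intro y hy
      rw [ι_decomp, add_mul, add_mul, add_mul, smul_mul_assoc, smul_mul_assoc,
        smul_mul_assoc, smul_mul_assoc]
      exact add_mem (add_mem (add_mem (W.smul_mem _ (gmulW 0 y hy))
        (W.smul_mem _ (gmulW 1 y hy))) (W.smul_mem _ (gmulW 2 y hy)))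
        (W.smul_mem _ (gmulW 3 y hy))
  | mul a b iha ihb =>
      intro y hy
      rw [mul_assoc]
      exact iha _ (ihb y hy)
  | add a b iha ihb =>
      intro y hy
      rw [add_mul]
      exact add_mem (iha y hy) (ihb y hy)

lemma allW (x : Cl) : x ∈ W := by
  simpa using leftMulW x 1 (Submodule.subset_span Bmem0)

def hGen : Fin 4 → Cl := ![eIdem, g 2 * g 3 * eIdem, g 1 * g 3 * eIdem, g 1 * g 2 * eIdem]

def H : Submodule ℝ Cl := Submodule.span ℝ (Set.range hGen)

lemma hGen_mem (i : Fin 4) : hGen i ∈ H := Submodule.subset_span ⟨i, rfl⟩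

lemma cornerBase (x : Cl) (hx : x ∈ Bset) : eIdem * x * eIdem ∈ H := by
  simp only [Bset, Set.mem_insert_iff, Set.mem_singleton_iff] at hx
  rcases hx with rfl|rfl|rfl|rfl|rfl|rfl|rfl|rfl|rfl|rfl|rfl|rfl|rfl|rfl|rfl|rfl
  · have h : eIdem * ((1 : Cl)) * eIdem = (eIdem) := by
      simp [eIdem_ex, mul_add, add_mul, mul_smul_comm, smul_mul_assoc, smul_smul, mul_assoc]
      try module
    rw [h]; exact hGen_mem 0
  · have h : eIdem * (g 0) * eIdem = (eIdem) := by
      simp [eIdem_ex, mul_add, add_mul, mul_smul_comm, smul_mul_assoc, smul_smul, mul_assoc]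
      try module
    rw [h]; exact hGen_mem 0
  · have h : eIdem * (g 1) * eIdem = 0 := by
      simp [eIdem_ex, mul_add, add_mul, mul_smul_comm, smul_mul_assoc, smul_smul, mul_assoc]
      try module
    rw [h]; exact H.zero_mem
  · have h : eIdem * (g 2) * eIdem = 0 := by
      simp [eIdem_ex, mul_add, add_mul, mul_smul_comm, smul_mul_assoc, smul_smul, mul_assoc]
      try module
    rw [h]; exact H.zero_mem
  · have h : eIdem * (g 3) * eIdem = 0 := by
      simp [eIdem_ex, mul_add, add_mul, mul_smul_comm, smul_mul_assoc, smul_smul, mul_assoc]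
      try module
    rw [h]; exact H.zero_mem
  · have h : eIdem * (g 0 * g 1) * eIdem = 0 := by
      simp [eIdem_ex, mul_add, add_mul, mul_smul_comm, smul_mul_assoc, smul_smul, mul_assoc]
      try module
    rw [h]; exact H.zero_mem
  · have h : eIdem * (g 0 * g 2) * eIdem = 0 := by
      simp [eIdem_ex, mul_add, add_mul, mul_smul_comm, smul_mul_assoc, smul_smul, mul_assoc]
      try module
    rw [h]; exact H.zero_mem
  · have h : eIdem * (g 0 * g 3) * eIdem = 0 := by
      simp [eIdem_ex, mul_add, add_mul, mul_smul_comm, smul_mul_assoc, smul_smul, mul_assoc]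
      try module
    rw [h]; exact H.zero_mem
  · have h : eIdem * (g 1 * g 2) * eIdem = (g 1 * g 2 * eIdem) := by
      simp [eIdem_ex, mul_add, add_mul, mul_smul_comm, smul_mul_assoc, smul_smul, mul_assoc]
      try module
    rw [h]; exact hGen_mem 3
  · have h : eIdem * (g 1 * g 3) * eIdem = (g 1 * g 3 * eIdem) := by
      simp [eIdem_ex, mul_add, add_mul, mul_smul_comm, smul_mul_assoc, smul_smul, mul_assoc]
      try module
    rw [h]; exact hGen_mem 2
  · have h : eIdem * (g 2 * g 3) * eIdem = (g 2 * g 3 * eIdem) := by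
      simp [eIdem_ex, mul_add, add_mul, mul_smul_comm, smul_mul_assoc, smul_smul, mul_assoc]
      try module
    rw [h]; exact hGen_mem 1
  · have h : eIdem * (g 0 * g 1 * g 2) * eIdem = (g 1 * g 2 * eIdem) := by
      simp [eIdem_ex, mul_add, add_mul, mul_smul_comm, smul_mul_assoc, smul_smul, mul_assoc]
      try module
    rw [h]; exact hGen_mem 3
  · have h : eIdem * (g 0 * g 1 * g 3) * eIdem = (g 1 * g 3 * eIdem) := by
      simp [eIdem_ex, mul_add, add_mul, mul_smul_comm, smul_mul_assoc, smul_smul, mul_assoc]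
      try module
    rw [h]; exact hGen_mem 2
  · have h : eIdem * (g 0 * g 2 * g 3) * eIdem = (g 2 * g 3 * eIdem) := by
      simp [eIdem_ex, mul_add, add_mul, mul_smul_comm, smul_mul_assoc, smul_smul, mul_assoc]
      try module
    rw [h]; exact hGen_mem 1
  · have h : eIdem * (g 1 * g 2 * g 3) * eIdem = 0 := by
      simp [eIdem_ex, mul_add, add_mul, mul_smul_comm, smul_mul_assoc, smul_smul, mul_assoc]
      try module
    rw [h]; exact H.zero_mem
  · have h : eIdem * (g 0 * g 1 * g 2 * g 3) * eIdem = 0 := by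
      simp [eIdem_ex, mul_add, add_mul, mul_smul_comm, smul_mul_assoc, smul_smul, mul_assoc]
      try module
    rw [h]; exact H.zero_mem

lemma cornerH (x : Cl) : eIdem * x * eIdem ∈ H := by
  have hx := allW x
  induction hx using Submodule.span_induction with
  | mem y hy => exact cornerBase y hy
  | zero => simpa using H.zero_mem
  | add a b ha hb iha ihb => simpa [mul_add, add_mul] using add_mem iha ihb
  | smul r a ha iha =>
      have : eIdem * (r • a) * eIdem = r • (eIdem * a * eIdem) := by
        rw [mul_smul_comm, smul_mul_assoc]
      rw [this]; exact H.smul_mem r iha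


def fmat : (Fin 4 → ℝ) →ₗ[ℝ] Mq where
  toFun v := !![qq (v 0) 0 0 0, qq 0 (v 1) (v 2) (v 3); qq 0 (v 1) (v 2) (v 3), qq (-v 0) 0 0 0]
  map_add' v w := by
    ext i j <;> fin_cases i <;> fin_cases j <;> simp [Quaternion.ext_iff] <;> ring
  map_smul' r v := by
    ext i j <;> fin_cases i <;> fin_cases j <;>
      simp [Quaternion.ext_iff, Quaternion.re_smul, Quaternion.imI_smul, Quaternion.imJ_smul,
        Quaternion.imK_smul]

lemma fmat_sq (v : Fin 4 → ℝ) : fmat v * fmat v = algebraMap ℝ Mq (Q13 v) := by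
  rw [Q13_apply]
  ext i j <;> fin_cases i <;> fin_cases j <;>
    simp [fmat, Matrix.mul_apply, Fin.sum_univ_two, Matrix.algebraMap_matrix_apply,
      Quaternion.ext_iff, QuaternionAlgebra.algebraMap_eq] <;> ring

def Φ : Cl →ₐ[ℝ] Mq := CliffordAlgebra.lift Q13 ⟨fmat, fmat_sq⟩

lemma Φ_g (μ : Fin 4) : Φ (g μ) = fmat (Pi.single μ 1) := CliffordAlgebra.lift_ι_apply _ _ _

lemma Φ_e : Φ eIdem = !![1, 0; 0, 0] := by
  rw [eIdem_ex]
  rw [map_add, map_smul, map_smul, map_one, Φ_g]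
  ext i j <;> fin_cases i <;> fin_cases j <;>
    simp [fmat, Pi.single_apply, Matrix.one_apply, Quaternion.ext_iff,
      Quaternion.re_smul, Quaternion.imI_smul, Quaternion.imJ_smul, Quaternion.imK_smul] <;>
    norm_num

lemma Φ_hGen00 (c : Fin 4 → ℝ) :
    (Φ (c 0 • hGen 0 + c 1 • hGen 1 + c 2 • hGen 2 + c 3 • hGen 3)) 0 0
      = qq (c 0) (c 1) (-(c 2)) (c 3) := by
  have h0 : hGen 0 = eIdem := rfl
  have h1 : hGen 1 = g 2 * g 3 * eIdem := rfl
  have h2 : hGen 2 = g 1 * g 3 * eIdem := rfl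
  have h3 : hGen 3 = g 1 * g 2 * eIdem := rfl
  rw [map_add, map_add, map_add, map_smul, map_smul, map_smul, map_smul,
    h0, h1, h2, h3, map_mul, map_mul, map_mul, map_mul, map_mul, map_mul, Φ_e]
  try rw [Φ_g]
  try rw [Φ_g]
  try rw [Φ_g]
  try rw [Φ_g]
  simp [fmat, Pi.single_apply, Matrix.mul_apply, Fin.sum_univ_two, Quaternion.ext_iff,
    Quaternion.re_smul, Quaternion.imI_smul, Quaternion.imJ_smul, Quaternion.imK_smul]

lemma corner_idem (x : Cl) (hx : eIdem * x * eIdem = x) (hxx : x * x = x) :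
    x = 0 ∨ x = eIdem := by
  have hH : x ∈ H := hx ▸ cornerH x
  rw [H, Submodule.mem_span_range_iff_exists_fun ℝ] at hH
  obtain ⟨c, hc⟩ := hH
  rw [Fin.sum_univ_four] at hc
  have h00 : Φ x 0 0 = qq (c 0) (c 1) (-(c 2)) (c 3) := by rw [← hc]; exact Φ_hGen00 c
  have hmatx : Φ x = !![qq (c 0) (c 1) (-(c 2)) (c 3), 0; 0, 0] := by
    have h1 : Φ x = Φ eIdem * Φ x * Φ eIdem := by rw [← map_mul, ← map_mul, hx]
    rw [Φ_e] at h1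
    have hcorner : ∀ M : Mq, !![1, 0; 0, 0] * M * !![1, 0; 0, 0] = !![M 0 0, 0; 0, 0] := by
      intro M
      ext i j <;> fin_cases i <;> fin_cases j <;>
        simp [Matrix.mul_apply, Matrix.vecMul, dotProduct, Fin.sum_univ_two]
    rw [hcorner] at h1
    rw [h1, h00]
  have hsq : Φ x * Φ x = Φ x := by rw [← map_mul, hxx]
  rw [hmatx, Matrix.mul_fin_two] at hsq
  have hq := congrArg (fun M : Mq => M 0 0) hsq
  simp [Quaternion.ext_iff] at hq
  obtain ⟨e1, e2, e3, e4⟩ := hq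
  by_cases hhalf : c 0 = 1/2
  · exfalso
    rw [hhalf] at e1
    nlinarith [mul_self_nonneg (c 1), mul_self_nonneg (c 2), mul_self_nonneg (c 3)]
  · have t1 : c 1 = 0 := by
      rcases mul_eq_zero.mp (show c 1 * (2 * c 0 - 1) = 0 by linear_combination e2) with h | h
      · exact h
      · exact absurd (by linarith : c 0 = 1/2) hhalf
    have t2 : c 2 = 0 := by
      rcases mul_eq_zero.mp (show c 2 * (2 * c 0 - 1) = 0 by linear_combination -e3) with h | h
      · exact h
      · exact absurd (by linarith : c 0 = 1/2) hhalf
    have t3 : c 3 = 0 := by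
      rcases mul_eq_zero.mp (show c 3 * (2 * c 0 - 1) = 0 by linear_combination e4) with h | h
      · exact h
      · exact absurd (by linarith : c 0 = 1/2) hhalf
    rw [t1, t2, t3] at hc
    rw [t1, t2, t3] at e1
    simp only [zero_smul, add_zero] at hc
    rcases mul_eq_zero.mp (show c 0 * (c 0 - 1) = 0 by linear_combination e1) with h | h
    · left; rw [← hc, h, zero_smul]
    · right
      rw [← hc, show c 0 = 1 by linarith, one_smul]
      rfl

/-- e = (1/2)(1 + γ⁰) is a primitive idempotent of Cl₁,₃: e² = e, e ≠ 0, and e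
cannot be written as e = p + q with p, q nonzero idempotents with pq = qp = 0. -/
theorem eIdem_primitive_idempotent :
    eIdem * eIdem = eIdem ∧ eIdem ≠ 0 ∧
      ¬∃ p q : CliffordAlgebra Q13, p ≠ 0 ∧ q ≠ 0 ∧
        p * p = p ∧ q * q = q ∧ p * q = 0 ∧ q * p = 0 ∧ eIdem = p + q := by
  have ee : eIdem * eIdem = eIdem := by
    simp [eIdem_ex, mul_add, add_mul, smul_smul, mul_smul_comm, smul_mul_assoc]
    try module
  refine ⟨ee, ?_, ?_⟩
  · intro h
    have h2 := congrArg (fun y : Cl => Φ y 0 0) h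
    simp only [map_zero, Φ_e, Matrix.zero_apply] at h2
    exact one_ne_zero (α := Quaternion ℝ) (by simpa using h2)
  · rintro ⟨p, q, hp0, hq0, hpp, hqq, hpq, hqp, he⟩
    have h1 : (p + q) * q = q := by rw [add_mul, hpq, hqq, zero_add]
    have h2 : q * (p + q) = q := by rw [mul_add, hqp, hqq, zero_add]
    have hq : eIdem * q * eIdem = q := by rw [he, h1, h2]
    rcases corner_idem q hq hqq with h | h
    · exact hq0 h
    · exact hp0 (add_eq_right.mp (he.symm.trans h.symm))
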